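/- Let m = 2^l·e > 2 with l ≥ 1 and e odd, e ≥ 3, and n = 2^m − 1. The binary cyclic code C_{S,0} := C(T_{(0,m)}) has length n, dimension 2^{m−1}, and its minimum distance d satisfies d ≥ 2^{(m−2^l+2)/2} + 2; in particular, if l = 1 then d ≥ 2^{m/2} + 2. -/

import Mathlib

open Polynomial

noncomputable def wt2 (a : ℕ) : ℕ := (Nat.digits 2 a).sum

noncomputable def ell (m i : ℕ) : ℕ :=
  sInf {l : ℕ | 0 < l ∧ i * 2 ^ l % (2 ^ m - 1) = i % (2 ^ m - 1)}

noncomputable def coset (m i : ℕ) : Finset ℕ :=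
  (Finset.range (ell m i)).image (fun j => i * 2 ^ j % (2 ^ m - 1))

noncomputable def rho (m i : ℕ) : ℕ := ((coset m i).filter (fun x => x % 2 = 0)).card

noncomputable def vv (m i : ℕ) : ℕ := m * rho m i / ell m i % 2

noncomputable def Tset (m j : ℕ) : Finset ℕ :=
  (Finset.range (2 ^ m - 1)).filter (fun i => vv m i = j)

noncomputable def Nset (m j : ℕ) : Finset ℕ :=
  (Finset.range (2 ^ m - 1)).filter (fun a => a ≠ 0 ∧ wt2 a % 2 = j)

noncomputable def epsilon (h a : ℕ) : ℕ :=
  if a = 2 ^ h - 1 then 1 else sInf {t : ℕ | 2 ^ h - 1 ≤ 2 ^ t * a}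

noncomputable def kappa (h a : ℕ) : ℕ := epsilon h a % 2

noncomputable def leader (m i : ℕ) : ℕ := sInf {x : ℕ | x ∈ coset m i}

noncomputable def uu (m h i : ℕ) : ℕ :=
  if leader m i = 1 then (vv m 1 + h + 1) % 2
  else if leader m i % 2 = 1 ∧ leader m i ≤ 2 ^ h - 1 then
    (kappa h (leader m i) + vv m (leader m i)) % 2
  else vv m (leader m i)

noncomputable def Dset (m h j : ℕ) : Finset ℕ :=
  (Finset.range (2 ^ m - 1)).filter (fun i => uu m h i = j)

noncomputable def cyclicCode (m : ℕ) (α : GaloisField 2 m) (T : Set ℕ) :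
    Submodule (ZMod 2) (Polynomial (ZMod 2)) :=
  Polynomial.degreeLT (ZMod 2) (2 ^ m - 1) ⊓
    ⨅ j ∈ T, LinearMap.ker (Polynomial.aeval (α ^ j)).toLinearMap

def minDistGE (C : Submodule (ZMod 2) (Polynomial (ZMod 2))) (d : ℕ) : Prop :=
  ∀ c ∈ C, c ≠ 0 → d ≤ c.support.card

/-!
For even `m` the parity `v_i` is the parity of the binary weight of `i`: multiplication by `2 ^ j`
modulo `2 ^ m - 1` rotates the `m` binary digits of `i`, so over a full period exactly `m - wt2 i`
of the residues `i * 2 ^ j` are even. Hence `T_{(0,m)}` is the set of the `2 ^ (m - 1) - 1`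
residues of even weight. It is closed under doubling, so the polynomial vanishing on
`{α ^ j | j ∈ T}` has binary coefficients and generates the code, whose dimension is therefore
`n - |T| = 2 ^ (m - 1)`.

For the distance put `u = 2 ^ (l - 1) (e - 1)` and `a = 2 ^ u + 1`. Since `gcd (2u, m) = 2 ^ l`
divides `u`, `a` is coprime to `n`, so `α ^ a` is again primitive; and `a * j mod n` has even
weight for `|j| ≤ 2 ^ u`. These `2 ^ (u + 1) + 1` consecutive zeros `(α ^ a) ^ j` give the BCH
bound `d ≥ 2 ^ (u + 1) + 2` by a Vandermonde argument.
-/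

section BinaryWeight

lemma wt2_mul_two_pow_add (a : ℕ) {k r : ℕ} (hr : r < 2 ^ k) :
    wt2 (a * 2 ^ k + r) = wt2 a + wt2 r := by
  rcases Nat.eq_zero_or_pos a with rfl | ha
  · simp [wt2]
  have hlen : (Nat.digits 2 r).length ≤ k := (Nat.digits_length_le_iff one_lt_two r).2 hr
  have h := Nat.digits_append_zeroes_append_digits (b := 2) (k := k - (Nat.digits 2 r).length)
    (n := r) (m := a) one_lt_two ha
  rw [Nat.add_sub_cancel' hlen] at h
  rw [wt2, wt2, wt2, add_comm (a * 2 ^ k), mul_comm a, ← h]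
  simp [add_comm]

lemma wt2_eq_div_two_add (x : ℕ) : wt2 x = wt2 (x / 2) + x % 2 := by
  have h := wt2_mul_two_pow_add (x / 2) (Nat.mod_lt x (by norm_num : 0 < 2 ^ 1))
  have hr : wt2 (x % 2) = x % 2 := by
    rcases Nat.mod_two_eq_zero_or_one x with h | h <;> simp [h, wt2]
  rwa [pow_one, Nat.div_add_mod', hr] at h

lemma wt2_le {m x : ℕ} (hx : x < 2 ^ m) : wt2 x ≤ m := by
  have hlen : (Nat.digits 2 x).length ≤ m := (Nat.digits_length_le_iff one_lt_two x).2 hx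
  calc wt2 x ≤ (Nat.digits 2 x).length • 1 :=
        List.sum_le_card_nsmul _ _ fun d hd => Nat.le_of_lt_succ (Nat.digits_lt_base one_lt_two hd)
    _ ≤ m := by simpa using hlen

lemma wt2_two_pow_sub_one_sub {m x : ℕ} (hx : x < 2 ^ m) :
    wt2 (2 ^ m - 1 - x) = m - wt2 x := by
  induction m generalizing x with
  | zero => simp_all [wt2]
  | succ m ih =>
    have hx2 : x / 2 < 2 ^ m := by rw [pow_succ] at hx; omega
    have hhalf : (2 ^ (m + 1) - 1 - x) / 2 = 2 ^ m - 1 - x / 2 := by rw [pow_succ]; omega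
    have hbit : (2 ^ (m + 1) - 1 - x) % 2 = 1 - x % 2 := by rw [pow_succ] at hx ⊢; omega
    rw [wt2_eq_div_two_add, hhalf, hbit, ih hx2, wt2_eq_div_two_add x]
    have := wt2_le hx2
    omega

lemma wt2_eq_sum_range {m x : ℕ} (hx : x < 2 ^ m) :
    wt2 x = ∑ b ∈ Finset.range m, x / 2 ^ b % 2 := by
  induction m generalizing x with
  | zero => simp_all [wt2]
  | succ m ih =>
    rw [wt2_eq_div_two_add, ih (by rw [pow_succ] at hx; omega), Finset.sum_range_succ']
    simp [pow_succ', ← Nat.div_div_eq_div_mul]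

end BinaryWeight

section Rotation

variable {m i : ℕ}

lemma mul_two_pow_mod_two_pow_sub_one {j : ℕ} (hj : j ≤ m) (hi : i < 2 ^ m - 1) :
    i * 2 ^ j % (2 ^ m - 1) = i % 2 ^ (m - j) * 2 ^ j + i / 2 ^ (m - j) := by
  set A := 2 ^ j
  set B := 2 ^ (m - j)
  have hAB : A * B = 2 ^ m := by rw [← pow_add, Nat.add_sub_cancel' hj]
  have hA : 0 < A := by positivity
  have hB : 0 < B := by positivity
  set q := i / B
  set r := i % B
  have hi' : i = q * B + r := (Nat.div_add_mod' i B).symm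
  have hr : r < B := Nat.mod_lt i hB
  have hq : q < A := (Nat.div_lt_iff_lt_mul hB).2 (by rw [hAB]; omega)
  have hsplit : i * A = r * A + q + q * (2 ^ m - 1) := by
    rw [hi', ← hAB, Nat.mul_sub_one]
    have : q ≤ q * (A * B) := Nat.le_mul_of_pos_right q (by positivity)
    zify [this]; ring
  have hlt : r * A + q < 2 ^ m - 1 := by
    -- equality would force `q = A - 1` and `r = B - 1`, that is `i = 2 ^ m - 1`
    rw [← hAB] at hi ⊢
    by_contra! h
    have hBA : (B - 1) * A = A * B - A := by rw [Nat.sub_one_mul, mul_comm]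
    have hAAB : A ≤ A * B := Nat.le_mul_of_pos_right A hB
    have hBAB : B ≤ A * B := Nat.le_mul_of_pos_left B hA
    have hr' : r = B - 1 := by
      have := Nat.le_of_mul_le_mul_right (a := B - 1) (b := r) (by omega) hA
      omega
    have hq' : q = A - 1 := by rw [hr', hBA] at h; omega
    have hqB : q * B = A * B - B := by rw [hq', Nat.sub_one_mul]
    omega
  rw [hsplit, Nat.add_mul_mod_self_right, Nat.mod_eq_of_lt hlt]

lemma wt2_mul_two_pow_mod {j : ℕ} (hj : j ≤ m) (hi : i < 2 ^ m - 1) :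
    wt2 (i * 2 ^ j % (2 ^ m - 1)) = wt2 i := by
  have hq : i / 2 ^ (m - j) < 2 ^ j := by
    rw [Nat.div_lt_iff_lt_mul (by positivity), ← pow_add, Nat.add_sub_cancel' hj]
    omega
  rw [mul_two_pow_mod_two_pow_sub_one hj hi, wt2_mul_two_pow_add _ hq, add_comm,
    ← wt2_mul_two_pow_add _ (Nat.mod_lt i (by positivity)), Nat.div_add_mod']

lemma mul_two_pow_self_mod_two_pow_sub_one (m i : ℕ) :
    i * 2 ^ m % (2 ^ m - 1) = i % (2 ^ m - 1) := by
  have h : i * 2 ^ m ≡ i * 1 [MOD 2 ^ m - 1] := (Nat.modEq_sub Nat.one_le_two_pow).mul_left i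
  rwa [mul_one] at h

lemma mul_two_pow_sub_mod_two {b : ℕ} (hb : b < m) (hi : i < 2 ^ m - 1) :
    i * 2 ^ (m - b) % (2 ^ m - 1) % 2 = i / 2 ^ b % 2 := by
  rw [mul_two_pow_mod_two_pow_sub_one (Nat.sub_le m b) hi, Nat.sub_sub_self hb.le,
    Nat.add_mod, Nat.mul_mod, Nat.pow_mod]
  simp [Nat.zero_pow (Nat.sub_pos_of_lt hb)]

lemma sum_range_mul_two_pow_mod_two (hi : i < 2 ^ m - 1) :
    ∑ j ∈ Finset.range m, i * 2 ^ j % (2 ^ m - 1) % 2 = wt2 i := by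
  set x : ℕ → ℕ := fun j => i * 2 ^ j % (2 ^ m - 1) % 2
  have hperiod : x m = x 0 := by
    simp only [x, pow_zero, mul_one, mul_two_pow_self_mod_two_pow_sub_one]
  have hshift : ∑ j ∈ Finset.range m, x (j + 1) = ∑ j ∈ Finset.range m, x j := by
    have h := Finset.sum_range_succ' x m
    rw [Finset.sum_range_succ, hperiod] at h
    exact (add_right_cancel h).symm
  rw [← hshift, ← Finset.sum_range_reflect, wt2_eq_sum_range (m := m) (by omega)]
  refine Finset.sum_congr rfl fun b hb => ?_
  have hb : b < m := Finset.mem_range.1 hb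
  rw [show m - 1 - b + 1 = m - b by omega]
  exact mul_two_pow_sub_mod_two hb hi

end Rotation

open Function in
theorem Function.IsPeriodicPt.sum_range_iterate {α M : Type*} [AddCommMonoid M] {f : α → α}
    {x : α} {m : ℕ} (h : IsPeriodicPt f m x) (g : α → M) :
    ∑ j ∈ Finset.range m, g (f^[j] x) =
      (m / minimalPeriod f x) • ∑ j ∈ Finset.range (minimalPeriod f x), g (f^[j] x) := by
  obtain ⟨q, rfl⟩ := h.minimalPeriod_dvd
  set p := minimalPeriod f x
  rcases Nat.eq_zero_or_pos p with hp | hp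
  · simp [hp]
  rw [Nat.mul_div_cancel_left q hp]
  clear h
  induction q with
  | zero => simp
  | succ q ih =>
    rw [mul_add_one, Finset.sum_range_add, ih, succ_nsmul]
    congr 1
    refine Finset.sum_congr rfl fun j _ => ?_
    rw [add_comm, iterate_add_apply, ((isPeriodicPt_minimalPeriod f x).mul_const q).eq]

def doubleMod (n x : ℕ) : ℕ := 2 * x % n

section DoublingOrbit

open Function

variable {m i : ℕ}

lemma iterate_doubleMod {n : ℕ} (hi : i < n) (j : ℕ) : (doubleMod n)^[j] i = i * 2 ^ j % n := by
  induction j with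
  | zero => simp [Nat.mod_eq_of_lt hi]
  | succ j ih => rw [iterate_succ_apply', ih, doubleMod, Nat.mul_mod_mod, pow_succ]; ring_nf

lemma isPeriodicPt_doubleMod_iff {j : ℕ} (hi : i < 2 ^ m - 1) :
    IsPeriodicPt (doubleMod (2 ^ m - 1)) j i ↔ i * 2 ^ j % (2 ^ m - 1) = i % (2 ^ m - 1) := by
  rw [IsPeriodicPt, IsFixedPt, iterate_doubleMod hi, Nat.mod_eq_of_lt hi]

lemma ell_eq_minimalPeriod (hi : i < 2 ^ m - 1) :
    ell m i = minimalPeriod (doubleMod (2 ^ m - 1)) i := by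
  rw [minimalPeriod_eq_sInf_n_pos_IsPeriodicPt, ell]
  congr 1
  ext j
  simp [isPeriodicPt_doubleMod_iff hi]

lemma coset_eq_image_iterate (hi : i < 2 ^ m - 1) :
    coset m i = (Finset.range (minimalPeriod (doubleMod (2 ^ m - 1)) i)).image
      fun j => (doubleMod (2 ^ m - 1))^[j] i := by
  rw [coset, ell_eq_minimalPeriod hi]
  exact Finset.image_congr fun j _ => (iterate_doubleMod hi j).symm

lemma vv_eq (hi : i < 2 ^ m - 1) : vv m i = (m - wt2 i) % 2 := by
  set f := doubleMod (2 ^ m - 1)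
  set p := minimalPeriod f i
  set isEven : ℕ → ℕ := fun y => if y % 2 = 0 then 1 else 0
  have hper : IsPeriodicPt f m i :=
    (isPeriodicPt_doubleMod_iff hi).2 (mul_two_pow_self_mod_two_pow_sub_one m i)
  have hrho : rho m i = ∑ j ∈ Finset.range p, isEven (f^[j] i) := by
    rw [rho, coset_eq_image_iterate hi, Finset.card_filter, Finset.sum_image]
    intro a ha b hb hab
    exact iterate_injOn_Iio_minimalPeriod (by simpa using ha) (by simpa using hb) hab
  have htotal : ∑ j ∈ Finset.range m, isEven (f^[j] i) + wt2 i = m := by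
    rw [← sum_range_mul_two_pow_mod_two hi, ← Finset.sum_add_distrib]
    calc _ = ∑ j ∈ Finset.range m, 1 := Finset.sum_congr rfl fun j _ => by
            rw [iterate_doubleMod hi]; simp only [isEven]; split_ifs <;> omega
      _ = m := by simp
  -- the orbit is traversed `m / p` times by `j < m`
  rw [vv, ell_eq_minimalPeriod hi, Nat.mul_div_right_comm hper.minimalPeriod_dvd, hrho,
    ← smul_eq_mul, ← hper.sum_range_iterate isEven]
  congr 1
  omega

end DoublingOrbit

lemma Tset_zero_eq_filter_wt2 {m : ℕ} (hm : Even m) :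
    Tset m 0 = (Finset.range (2 ^ m - 1)).filter fun i => wt2 i % 2 = 0 := by
  refine Finset.filter_congr fun i hi => ?_
  have hi : i < 2 ^ m - 1 := Finset.mem_range.1 hi
  have := wt2_le (m := m) (x := i) (by omega)
  rw [vv_eq hi]
  obtain ⟨k, rfl⟩ := hm
  omega

-- each pair `{2 a, 2 a + 1}` contains exactly one number of even weight
lemma card_filter_wt2_even (k : ℕ) :
    ((Finset.range (2 ^ (k + 1))).filter fun x => wt2 x % 2 = 0).card = 2 ^ k := by
  refine (Finset.card_nbij' (· / 2) (fun a => 2 * a + wt2 a % 2) ?_ ?_ ?_ ?_).trans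
    (Finset.card_range _)
  · intro x hx
    simp only [Finset.coe_filter, Finset.mem_range, Set.mem_ofPred_eq, Finset.coe_range,
      Set.mem_Iio, pow_succ] at hx ⊢
    omega
  · intro a ha
    simp only [Finset.coe_filter, Finset.mem_range, Set.mem_ofPred_eq, Finset.coe_range,
      Set.mem_Iio, pow_succ] at ha ⊢
    rw [wt2_eq_div_two_add (2 * a + wt2 a % 2), show (2 * a + wt2 a % 2) / 2 = a by omega]
    omega
  · intro x hx
    simp only [Finset.coe_filter, Finset.mem_range, Set.mem_ofPred_eq] at hx
    have := wt2_eq_div_two_add x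
    dsimp only
    omega
  · intro a _
    dsimp only
    omega

lemma card_Tset_zero {m : ℕ} (hm : Even m) (hm0 : 0 < m) :
    (Tset m 0).card = 2 ^ (m - 1) - 1 := by
  have hall := card_filter_wt2_even (m - 1)
  rw [Nat.sub_add_cancel hm0, ← Nat.sub_add_cancel (Nat.one_le_two_pow (n := m)),
    Finset.range_add_one, Finset.filter_insert, if_pos] at hall
  · rw [Tset_zero_eq_filter_wt2 hm]
    rw [Finset.card_insert_of_notMem (by simp)] at hall
    omega
  · rw [← Nat.sub_zero (2 ^ m - 1), wt2_two_pow_sub_one_sub (Nat.two_pow_pos m)]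
    simp [wt2, Nat.even_iff.1 hm]

section VanishingIdeal

variable {F L : Type*} [Field F] [Field L] [Algebra F L] {S : Finset L} {g : F[X]}

lemma monic_of_map_eq_prod_X_sub_C (hg : g.map (algebraMap F L) = ∏ x ∈ S, (X - C x)) :
    g.Monic := by
  rw [← monic_map_iff (f := algebraMap F L), hg]
  exact monic_prod_of_monic _ _ fun x _ => monic_X_sub_C x

lemma dvd_iff_forall_aeval_eq_zero (hg : g.map (algebraMap F L) = ∏ x ∈ S, (X - C x))
    (p : F[X]) : g ∣ p ↔ ∀ x ∈ S, aeval x p = 0 := by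
  have hmonic := monic_of_map_eq_prod_X_sub_C hg
  constructor
  · rintro ⟨q, rfl⟩ x hx
    rw [map_mul, aeval_def, ← eval_map, hg, eval_prod, Finset.prod_eq_zero hx (by simp),
      zero_mul]
  · intro h
    rcases eq_or_ne p 0 with rfl | hp
    · exact dvd_zero g
    have hp' : p.map (algebraMap F L) ≠ 0 :=
      (Polynomial.map_ne_zero_iff (algebraMap F L).injective).2 hp
    rw [← map_dvd_map (algebraMap F L) (algebraMap F L).injective hmonic, hg,
      Finset.prod_eq_multiset_prod, Multiset.prod_X_sub_C_dvd_iff_le_roots hp',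
      Multiset.le_iff_subset S.nodup]
    intro x hx
    rw [mem_roots hp', IsRoot, eval_map, ← aeval_def]
    exact h x hx

theorem degreeLT_inf_iInf_ker_aeval_eq_map (hg : g.map (algebraMap F L) = ∏ x ∈ S, (X - C x))
    (n : ℕ) : degreeLT F n ⊓ ⨅ x ∈ S, LinearMap.ker (aeval x).toLinearMap =
      (degreeLT F (n - S.card)).map (LinearMap.mulLeft F g) := by
  have hdeg : g.natDegree = S.card := by
    rw [← natDegree_map_eq_of_injective (algebraMap F L).injective, hg,
      natDegree_finsetProd_X_sub_C_eq_card]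
  have hg0 : g ≠ 0 := (monic_of_map_eq_prod_X_sub_C hg).ne_zero
  ext p
  simp only [Submodule.mem_inf, Submodule.mem_iInf, LinearMap.mem_ker, AlgHom.toLinearMap_apply,
    Submodule.mem_map, LinearMap.mulLeft_apply, mem_degreeLT, ← dvd_iff_forall_aeval_eq_zero hg]
  constructor
  · rintro ⟨hpn, q, rfl⟩
    refine ⟨q, ?_, rfl⟩
    rcases eq_or_ne q 0 with rfl | hq
    · simp
    rw [← natDegree_lt_iff_degree_lt hq]
    rw [← natDegree_lt_iff_degree_lt (mul_ne_zero hg0 hq), natDegree_mul hg0 hq] at hpn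
    omega
  · rintro ⟨q, hq, rfl⟩
    refine ⟨?_, dvd_mul_right g q⟩
    rcases eq_or_ne q 0 with rfl | hq0
    · simp
    rw [← natDegree_lt_iff_degree_lt hq0] at hq
    rw [← natDegree_lt_iff_degree_lt (mul_ne_zero hg0 hq0), natDegree_mul hg0 hq0]
    omega

theorem finrank_degreeLT_inf_iInf_ker_aeval
    (hg : g.map (algebraMap F L) = ∏ x ∈ S, (X - C x)) (n : ℕ) :
    Module.finrank F ↥(degreeLT F n ⊓ ⨅ x ∈ S, LinearMap.ker (aeval x).toLinearMap) =
      n - S.card := by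
  have hinj : Function.Injective (LinearMap.mulLeft F g) :=
    mul_right_injective₀ (monic_of_map_eq_prod_X_sub_C hg).ne_zero
  rw [degreeLT_inf_iInf_ker_aeval_eq_map hg n,
    ← (Submodule.equivMapOfInjective _ hinj _).finrank_eq, (degreeLTEquiv F _).finrank_eq,
    Module.finrank_fin_fun]

end VanishingIdeal

section Frobenius

lemma map_frobenius_prod_X_sub_C {L : Type*} [Field L] (p : ℕ) [ExpChar L p] {S : Finset L}
    (hS : ∀ x ∈ S, x ^ p ∈ S) :
    (∏ x ∈ S, (X - C x)).map (frobenius L p) = ∏ x ∈ S, (X - C x) := by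
  classical
  have hinj : Function.Injective (· ^ p : L → L) := frobenius_inj L p
  have himage : S.image (· ^ p) = S :=
    Finset.eq_of_subset_of_card_le (Finset.image_subset_iff.2 hS)
      (Finset.card_image_of_injective S hinj).ge
  rw [Polynomial.map_prod]
  simp only [Polynomial.map_sub, map_X, map_C, frobenius_def]
  conv_rhs => rw [← himage]
  rw [Finset.prod_image fun x _ y _ hxy => hinj hxy]

lemma mem_lifts_of_map_frobenius_eq {L : Type*} [Field L] [Algebra (ZMod 2) L] [ExpChar L 2]
    {f : L[X]} (hf : f.map (frobenius L 2) = f) : f ∈ lifts (algebraMap (ZMod 2) L) := by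
  rw [lifts_iff_coeff_lifts]
  intro k
  have hidem : IsIdempotentElem (f.coeff k) := by
    rw [IsIdempotentElem, ← pow_two, ← frobenius_def, ← coeff_map, hf]
  rcases IsIdempotentElem.iff_eq_zero_or_one.1 hidem with h | h
  · exact ⟨0, by rw [h, map_zero]⟩
  · exact ⟨1, by rw [h, map_one]⟩

end Frobenius

section BCHBound

open Matrix

lemma eq_zero_of_forall_sum_mul_pow_eq_zero {K : Type*} [Field K] {w : ℕ} {y : Fin w → K}
    (hy : Function.Injective y) (hy0 : ∀ i, y i ≠ 0) {c : Fin w → K} (i₀ : ℕ)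
    (h : ∀ k : Fin w, ∑ i, c i * y i ^ (i₀ + k) = 0) : c = 0 := by
  have hv : (vandermonde y)ᵀ *ᵥ (fun i => c i * y i ^ i₀) = 0 := by
    ext k
    rw [Pi.zero_apply, ← h k]
    simp [mulVec, dotProduct, vandermonde_apply, pow_add, mul_assoc, mul_comm]
  have hdet : (vandermonde y)ᵀ.det ≠ 0 := by
    rw [det_transpose]
    exact det_vandermonde_ne_zero_iff.2 hy
  funext i
  simpa [hy0 i] using congrFun (eq_zero_of_mulVec_eq_zero hdet hv) i

theorem card_support_ge_of_aeval_pow_eq_zero {F K : Type*} [Field F] [Field K] [Algebra F K]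
    {γ : K} {p : F[X]} (hp0 : p ≠ 0) (hpγ : p.natDegree < orderOf γ) (i₀ N : ℕ)
    (h : ∀ k ≤ N, aeval (γ ^ (i₀ + k)) p = 0) : N + 2 ≤ p.support.card := by
  by_contra! hw
  set s := p.support
  set t := s.orderEmbOfFin rfl
  have ht : ∀ i, t i < orderOf γ := fun i =>
    (le_natDegree_of_mem_supp _ (s.orderEmbOfFin_mem rfl i)).trans_lt hpγ
  have hγ0 : γ ≠ 0 := by
    rintro rfl
    simp at hpγ
  have hy : Function.Injective fun i => γ ^ t i := fun i j hij =>
    t.injective (pow_injOn_Iio_orderOf (ht i) (ht j) hij)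
  have hreindex (f : ℕ → K) : ∑ n ∈ s, f n = ∑ i, f (t i) := by
    conv_lhs => rw [← s.map_orderEmbOfFin_univ rfl, Finset.sum_map]
    rfl
  have hsum : ∀ k : Fin s.card,
      ∑ i, algebraMap F K (p.coeff (t i)) * (γ ^ t i) ^ (i₀ + k) = 0 := by
    intro k
    rw [← h k (by omega), aeval_def, eval₂_eq_sum, Polynomial.sum_def, hreindex]
    refine Finset.sum_congr rfl fun i _ => ?_
    rw [← pow_mul, ← pow_mul, mul_comm (t i)]
  have hc := eq_zero_of_forall_sum_mul_pow_eq_zero hy (fun i => pow_ne_zero _ hγ0) i₀ hsum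
  have hs0 : 0 < s.card := Finset.card_pos.2 (support_nonempty.2 hp0)
  refine mem_support_iff.1 (s.orderEmbOfFin_mem rfl ⟨0, hs0⟩) ?_
  simpa using congrFun hc ⟨0, hs0⟩

end BCHBound

lemma Nat.coprime_two_pow_add_one_two_pow_sub_one {u m : ℕ} (hm : 0 < m)
    (h : Nat.gcd (2 * u) m ∣ u) : Nat.Coprime (2 ^ u + 1) (2 ^ m - 1) := by
  set d := Nat.gcd (2 ^ u + 1) (2 ^ m - 1)
  have hsq : 2 ^ u + 1 ∣ 2 ^ (2 * u) - 1 :=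
    ⟨2 ^ u - 1, by rw [mul_comm 2, pow_mul, ← one_pow 2, Nat.sq_sub_sq, one_pow]⟩
  have hd : d ∣ 2 ^ u - 1 := by
    refine dvd_trans ?_ (Nat.pow_sub_one_dvd_pow_sub_one 2 h)
    rw [← Nat.pow_sub_one_gcd_pow_sub_one]
    exact Nat.dvd_gcd ((Nat.gcd_dvd_left _ _).trans hsq) (Nat.gcd_dvd_right _ _)
  have hd2 : d ∣ 2 := by
    have := Nat.dvd_sub (Nat.gcd_dvd_left _ _) hd
    rwa [show 2 ^ u + 1 - (2 ^ u - 1) = 2 by have := Nat.one_le_two_pow (n := u); omega] at this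
  have hodd : Odd d := by
    refine Odd.of_dvd_nat ?_ (Nat.gcd_dvd_right _ _)
    exact Nat.Even.sub_odd Nat.one_le_two_pow ((Nat.even_pow' hm.ne').2 even_two) odd_one
  rcases (Nat.dvd_prime Nat.prime_two).1 hd2 with h1 | h2
  · exact h1
  · exact absurd (h2 ▸ hodd) (by decide)

lemma wt2_two_pow_add_one_mul_even {u d : ℕ} (hu : 0 < u) (hd : d ≤ 2 ^ u) :
    wt2 ((2 ^ u + 1) * d) % 2 = 0 := by
  rcases hd.lt_or_eq with hd | rfl
  · rw [show (2 ^ u + 1) * d = d * 2 ^ u + d by ring, wt2_mul_two_pow_add d hd]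
    omega
  · have h1 : 1 < 2 ^ u := Nat.one_lt_two_pow hu.ne'
    rw [show (2 ^ u + 1) * 2 ^ u = (1 * 2 ^ u + 1) * 2 ^ u + 0 by ring,
      wt2_mul_two_pow_add _ (Nat.two_pow_pos u), wt2_mul_two_pow_add _ h1]
    simp [wt2]

lemma mem_Tset_zero_iff {m i : ℕ} (hm : Even m) :
    i ∈ Tset m 0 ↔ i < 2 ^ m - 1 ∧ wt2 i % 2 = 0 := by
  rw [Tset_zero_eq_filter_wt2 hm, Finset.mem_filter, Finset.mem_range]

lemma two_pow_add_one_mul_two_pow_lt {m u : ℕ} (hu : 0 < u) (hum : 2 * u + 2 ≤ m) :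
    (2 ^ u + 1) * 2 ^ u < 2 ^ m - 1 := by
  have hu2 : 2 ≤ 2 ^ u := Nat.one_lt_two_pow hu.ne'
  have h1 : 2 ^ u * 2 ^ u * 4 ≤ 2 ^ m := by
    rw [← pow_add, show 4 = 2 ^ 2 by rfl, ← pow_add]
    exact Nat.pow_le_pow_right two_pos (by omega)
  have h2 : 2 ^ u * 4 ≤ 2 ^ u * 2 ^ u * 4 := by nlinarith
  rw [add_mul, one_mul]
  omega

lemma Nat.mul_sub_modEq_sub_mul {a n d : ℕ} (hd : d ≤ n) (had : a * d ≤ n) :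
    a * (n - d) ≡ n - a * d [MOD n] := by
  refine Nat.ModEq.add_right_cancel' (a * d) ?_
  rw [← mul_add, Nat.sub_add_cancel hd, Nat.sub_add_cancel had]
  exact (Nat.modEq_zero_iff_dvd.2 (dvd_mul_left n a)).trans
    (Nat.modEq_zero_iff_dvd.2 dvd_rfl).symm

-- the residues `a * (k - 2 ^ u) mod n` with `a = 2 ^ u + 1`, `n = 2 ^ m - 1`, `0 ≤ k ≤ 2 ^ (u + 1)`
lemma two_pow_add_one_mul_mem_Tset_zero {m u k : ℕ} (hm : Even m) (hu : 0 < u)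
    (hum : 2 * u + 2 ≤ m) (hk : k ≤ 2 ^ (u + 1)) :
    (2 ^ u + 1) * (2 ^ m - 1 - 2 ^ u + k) % (2 ^ m - 1) ∈ Tset m 0 := by
  have han := two_pow_add_one_mul_two_pow_lt hu hum
  have hun : 2 ^ u ≤ 2 ^ m - 1 := le_trans (Nat.le_mul_of_pos_left _ (by omega)) han.le
  rw [mem_Tset_zero_iff hm]
  refine ⟨Nat.mod_lt _ (by omega), ?_⟩
  rcases lt_or_ge k (2 ^ u) with hk' | hk'
  · obtain ⟨d, hd0, hdu, rfl⟩ : ∃ d, 0 < d ∧ d ≤ 2 ^ u ∧ k = 2 ^ u - d :=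
      ⟨2 ^ u - k, by omega, by omega, by omega⟩
    have had : (2 ^ u + 1) * d ≤ (2 ^ u + 1) * 2 ^ u := Nat.mul_le_mul_left _ hdu
    have had0 : 0 < (2 ^ u + 1) * d := by positivity
    rw [show 2 ^ m - 1 - 2 ^ u + (2 ^ u - d) = 2 ^ m - 1 - d by omega,
      Nat.mul_sub_modEq_sub_mul (by omega) (by omega), Nat.mod_eq_of_lt (a := 2 ^ m - 1 - _)
      (by omega), wt2_two_pow_sub_one_sub (by omega)]
    have := wt2_le (m := m) (x := (2 ^ u + 1) * d) (by omega)
    have := wt2_two_pow_add_one_mul_even hu hdu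
    obtain ⟨j, rfl⟩ := hm
    omega
  · obtain ⟨d, hdu, rfl⟩ : ∃ d, d ≤ 2 ^ u ∧ k = 2 ^ u + d :=
      ⟨k - 2 ^ u, by rw [pow_succ] at hk; omega, by omega⟩
    have had : (2 ^ u + 1) * d < 2 ^ m - 1 := lt_of_le_of_lt (Nat.mul_le_mul_left _ hdu) han
    rw [show 2 ^ m - 1 - 2 ^ u + (2 ^ u + d) = d + (2 ^ m - 1) by omega, mul_add,
      Nat.add_mul_mod_self_right, Nat.mod_eq_of_lt had]
    exact wt2_two_pow_add_one_mul_even hu hdu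

section CodeTsetZero

variable {m : ℕ} (α : GaloisField 2 m)

lemma mem_cyclicCode_iff {T : Finset ℕ} {c : (ZMod 2)[X]} :
    c ∈ cyclicCode m α (↑T : Set ℕ) ↔
      c ∈ degreeLT (ZMod 2) (2 ^ m - 1) ∧ ∀ j ∈ T, aeval (α ^ j) c = 0 := by
  simp [cyclicCode]

theorem finrank_cyclicCode_Tset_zero (hm : Even m) (hm0 : 0 < m) (hα : orderOf α = 2 ^ m - 1) :
    Module.finrank (ZMod 2) ↥(cyclicCode m α (↑(Tset m 0) : Set ℕ)) = 2 ^ (m - 1) := by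
  classical
  set S := (Tset m 0).image (α ^ ·)
  have hcode : cyclicCode m α (↑(Tset m 0) : Set ℕ) =
      degreeLT (ZMod 2) (2 ^ m - 1) ⊓ ⨅ x ∈ S, LinearMap.ker (aeval x).toLinearMap := by
    rw [cyclicCode, Finset.iInf_finset_image]
    simp only [Finset.mem_coe]
  have hcard : S.card = (Tset m 0).card := by
    refine Finset.card_image_of_injOn fun i hi j hj hij => pow_injOn_Iio_orderOf ?_ ?_ hij
    · simpa [hα] using ((mem_Tset_zero_iff hm).1 hi).1
    · simpa [hα] using ((mem_Tset_zero_iff hm).1 hj).1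
  have hsq : ∀ x ∈ S, x ^ 2 ∈ S := by
    simp only [S, Finset.mem_image, forall_exists_index, and_imp, forall_apply_eq_imp_iff₂]
    intro j hj
    rw [mem_Tset_zero_iff hm] at hj
    refine ⟨j * 2 ^ 1 % (2 ^ m - 1), ?_, ?_⟩
    · rw [mem_Tset_zero_iff hm, wt2_mul_two_pow_mod hm0 hj.1]
      exact ⟨Nat.mod_lt _ (by omega), hj.2⟩
    · rw [← hα, pow_mod_orderOf, ← pow_mul, pow_one]
  obtain ⟨g, hg⟩ : ∃ g : (ZMod 2)[X], g.map (algebraMap _ _) = ∏ x ∈ S, (X - C x) :=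
    (mem_lifts _).1 (mem_lifts_of_map_frobenius_eq (map_frobenius_prod_X_sub_C 2 hsq))
  rw [hcode, finrank_degreeLT_inf_iInf_ker_aeval hg, hcard, card_Tset_zero hm hm0]
  have : 2 ^ m = 2 * 2 ^ (m - 1) := by rw [← pow_succ', Nat.sub_add_cancel hm0]
  have := Nat.one_le_two_pow (n := m - 1)
  omega

theorem minDistGE_cyclicCode_Tset_zero {u : ℕ} (hm : Even m) (hu : 0 < u) (hum : 2 * u + 2 ≤ m)
    (hcop : Nat.Coprime (2 ^ u + 1) (2 ^ m - 1)) (hα : orderOf α = 2 ^ m - 1) :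
    minDistGE (cyclicCode m α (↑(Tset m 0) : Set ℕ)) (2 ^ (u + 1) + 2) := by
  intro c hc hc0
  rw [mem_cyclicCode_iff] at hc
  have hord : orderOf (α ^ (2 ^ u + 1)) = 2 ^ m - 1 := by
    rw [Nat.Coprime.orderOf_pow (by rwa [hα, Nat.coprime_comm]), hα]
  refine card_support_ge_of_aeval_pow_eq_zero (γ := α ^ (2 ^ u + 1)) hc0 ?_ (2 ^ m - 1 - 2 ^ u) _
    fun k hk => ?_
  · rw [hord, natDegree_lt_iff_degree_lt hc0, ← mem_degreeLT]
    exact hc.1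
  · rw [← pow_mul, ← hα, ← pow_mod_orderOf, hα]
    exact hc.2 _ (two_pow_add_one_mul_mem_Tset_zero hm hu hum hk)

end CodeTsetZero

theorem stmt10_general (m l e : ℕ) (hl : 1 ≤ l) (he : Odd e) (he3 : 3 ≤ e)
    (hm : m = 2 ^ l * e)
    (α : GaloisField 2 m) (hα : orderOf α = 2 ^ m - 1) :
    Module.finrank (ZMod 2) ↥(cyclicCode m α (↑(Tset m 0) : Set ℕ)) = 2 ^ (m - 1) ∧
    minDistGE (cyclicCode m α (↑(Tset m 0) : Set ℕ)) (2 ^ ((m - 2 ^ l + 2) / 2) + 2) ∧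
    (l = 1 → minDistGE (cyclicCode m α (↑(Tset m 0) : Set ℕ)) (2 ^ (m / 2) + 2)) := by
  obtain ⟨f, rfl⟩ := he
  have hl2 : 2 ≤ 2 ^ l := by simpa using Nat.pow_le_pow_right two_pos hl
  have hf : 0 < 2 ^ l * f := Nat.mul_pos (by omega) (by omega)
  have hm' : m = 2 * (2 ^ l * f) + 2 ^ l := by rw [hm]; ring
  have hme : Even m := by
    rw [hm]; exact (Nat.even_pow.2 ⟨even_two, by omega⟩).mul_right _
  have hgcd : Nat.gcd (2 * (2 ^ l * f)) m ∣ 2 ^ l * f := by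
    rw [hm, show 2 * (2 ^ l * f) = 2 ^ l * (2 * f) by ring, Nat.gcd_mul_left,
      Nat.gcd_self_add_right, Nat.gcd_one_right, mul_one]
    exact dvd_mul_right _ _
  have hdist := minDistGE_cyclicCode_Tset_zero α hme hf (by omega)
    (Nat.coprime_two_pow_add_one_two_pow_sub_one (by omega) hgcd) hα
  refine ⟨finrank_cyclicCode_Tset_zero α hme (by omega) hα, ?_, fun hl1 => ?_⟩
  · rwa [show (m - 2 ^ l + 2) / 2 = 2 ^ l * f + 1 by omega]
  · subst hl1
    rwa [show m / 2 = 2 ^ 1 * f + 1 by omega]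

theorem stmt10 (m l e : ℕ) (hl : 1 ≤ l) (he : Odd e) (he3 : 3 ≤ e)
    (hm : m = 2 ^ l * e) (hm2 : 2 < m)
    (α : GaloisField 2 m) (hα : orderOf α = 2 ^ m - 1) :
    Module.finrank (ZMod 2) ↥(cyclicCode m α (↑(Tset m 0) : Set ℕ)) = 2 ^ (m - 1) ∧
    minDistGE (cyclicCode m α (↑(Tset m 0) : Set ℕ)) (2 ^ ((m - 2 ^ l + 2) / 2) + 2) ∧
    (l = 1 → minDistGE (cyclicCode m α (↑(Tset m 0) : Set ℕ)) (2 ^ (m / 2) + 2)) :=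
  stmt10_general m l e hl he he3 hm α hα
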